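/- Let G be a graph whose vertex set is the disjoint union of an induced cycle (v_1,...,v_n) with n ≥ 5, an independent set D of 'clause-like' vertices each adjacent only to a proper subset of the cycle vertices with acyclic neighborhood, such that in G: (a) no vertex of D has a cycle in its neighborhood; (b) each v_j has neighborhood with vertex cover {v_{j-1}, v_{j+1}} of size 2 and no triangle. Then G contains no induced wheel W_m with m = 3 or m ≥ 5 (i.e., the only wheels G may contain as induced subgraphs are of size 4). -/
import Mathlib


open Finset

/-- `f : Fin m → V` is an induced cycle in `G`. -/
def IsInducedCycleOn {V : Type*} (G : SimpleGraph V) {m : ℕ} (f : Fin m → V) : Prop :=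
  Function.Injective f ∧
    ∀ i j : Fin m, G.Adj (f i) (f j) ↔
      ((i.val + 1) % m = j.val ∨ (j.val + 1) % m = i.val)

/-- The set `S` contains a (not necessarily induced) cycle of `G`:
distinct vertices `f 0, ..., f (m-1)` in `S`, cyclically consecutive ones adjacent. -/
def HasCycleIn {V : Type*} (G : SimpleGraph V) (S : Set V) : Prop :=
  ∃ (m : ℕ) (hm : 3 ≤ m) (f : Fin m → V), Function.Injective f ∧ (∀ i, f i ∈ S) ∧
    ∀ i : Fin m, G.Adj (f i) (f ⟨(i.val + 1) % m, Nat.mod_lt _ (by omega)⟩)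

/-- `G` contains an induced wheel of size `m` with center `center` and rim `f`. -/
def IsInducedWheel {V : Type*} (G : SimpleGraph V) (m : ℕ) (center : V) (f : Fin m → V) : Prop :=
  Function.Injective f ∧ center ∉ Set.range f ∧ (∀ i, G.Adj center (f i)) ∧
    ∀ i j : Fin m, G.Adj (f i) (f j) ↔
      ((i.val + 1) % m = j.val ∨ (j.val + 1) % m = i.val)

theorem stmt12 {V : Type*} (G : SimpleGraph V) (n : ℕ) (hn : 5 ≤ n)
    (v : Fin n → V) (hcyc : IsInducedCycleOn G v)
    (D : Set V)
    (hpart : ∀ x : V, x ∈ D ∨ x ∈ Set.range v)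
    (hdisj : ∀ i : Fin n, v i ∉ D)
    (hindep : ∀ d ∈ D, ∀ d' ∈ D, ¬ G.Adj d d')
    (hDadj : ∀ d ∈ D, ∀ x : V, G.Adj d x → x ∈ Set.range v)
    (hproper : ∀ d ∈ D, ∃ j : Fin n, ¬ G.Adj d (v j))
    (ha : ∀ d ∈ D, ¬ HasCycleIn G {x : V | G.Adj d x})
    (hbcover : ∀ (j : Fin n) (a b : V), G.Adj (v j) a → G.Adj (v j) b → G.Adj a b →
      a = v ⟨(j.val + 1) % n, Nat.mod_lt _ (by omega)⟩ ∨
      a = v ⟨(j.val + (n - 1)) % n, Nat.mod_lt _ (by omega)⟩ ∨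
      b = v ⟨(j.val + 1) % n, Nat.mod_lt _ (by omega)⟩ ∨
      b = v ⟨(j.val + (n - 1)) % n, Nat.mod_lt _ (by omega)⟩)
    (hbtri : ∀ (j : Fin n) (a b c : V), G.Adj (v j) a → G.Adj (v j) b → G.Adj (v j) c →
      G.Adj a b → G.Adj b c → G.Adj a c → False) :
    ∀ (m : ℕ) (center : V) (f : Fin m → V), (m = 3 ∨ 5 ≤ m) →
      ¬ IsInducedWheel G m center f := by
  classical
  rintro m center f hm ⟨hfinj, hcr, hadj, hrim⟩
  have hm0 : 0 < m := by omega
  set succ : Fin m → Fin m := fun i => ⟨(i.val + 1) % m, Nat.mod_lt _ hm0⟩ with hsucc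
  have hcons : ∀ i : Fin m, G.Adj (f i) (f (succ i)) := by
    intro i
    exact (hrim i (succ i)).2 (Or.inl rfl)
  have hsuccinj : Function.Injective succ := by
    intro a b hab
    have h1 : (a.val + 1) % m = (b.val + 1) % m := congrArg Fin.val hab
    have h2 : a.val ≡ b.val [MOD m] := Nat.ModEq.add_right_cancel' 1 h1
    have h3 : a.val % m = b.val % m := h2
    rw [Nat.mod_eq_of_lt a.isLt, Nat.mod_eq_of_lt b.isLt] at h3
    exact Fin.ext h3
  have hsuccne : ∀ i : Fin m, succ i ≠ i := by
    intro i h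
    have h1 : (i.val + 1) % m = i.val := congrArg Fin.val h
    have h2 : (i.val + 1) % m = (i.val + 0) % m := by
      rw [h1]; rw [Nat.add_zero, Nat.mod_eq_of_lt i.isLt]
    have h3 : (1 : ℕ) ≡ 0 [MOD m] := Nat.ModEq.add_left_cancel' i.val h2
    have h4 : (1 : ℕ) % m = 0 % m := h3
    rw [Nat.mod_eq_of_lt (by omega), Nat.zero_mod] at h4
    exact one_ne_zero h4
  rcases hpart center with hD | ⟨j, hj⟩
  · exact ha center hD ⟨m, by omega, f, hfinj, fun i => hadj i, hcons⟩
  · subst hj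
    rcases hm with rfl | hm5
    · have h01 : G.Adj (f 0) (f 1) := (hrim 0 1).2 (Or.inl rfl)
      have h12 : G.Adj (f 1) (f 2) := (hrim 1 2).2 (Or.inl rfl)
      have h02 : G.Adj (f 0) (f 2) := (hrim 0 2).2 (Or.inr rfl)
      exact hbtri j (f 0) (f 1) (f 2) (hadj 0) (hadj 1) (hadj 2) h01 h12 h02
    · set p := v ⟨(j.val + 1) % n, Nat.mod_lt _ (by omega)⟩ with hp
      set q := v ⟨(j.val + (n - 1)) % n, Nat.mod_lt _ (by omega)⟩ with hq
      have hpq : p ≠ q := by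
        intro h
        have h1 := hcyc.1 h
        have h2 : (j.val + 1) % n = (j.val + (n - 1)) % n := congrArg Fin.val h1
        have h3 : j.val + 1 ≡ j.val + (n - 1) [MOD n] := h2
        have h4 : n ∣ (j.val + (n - 1)) - (j.val + 1) := (Nat.modEq_iff_dvd' (by omega)).1 h3
        have h5 : (j.val + (n - 1)) - (j.val + 1) = n - 2 := by omega
        rw [h5] at h4
        have := Nat.le_of_dvd (by omega) h4
        omega
      have hcov : ∀ i : Fin m, f i = p ∨ f i = q ∨ f (succ i) = p ∨ f (succ i) = q := by
        intro i
        exact hbcover j (f i) (f (succ i)) (hadj i) (hadj (succ i)) (hcons i)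
      set c : Fin m → Fin m := fun i => if f i = p ∨ f i = q then i else succ i with hc
      have hfc : ∀ i, f (c i) = p ∨ f (c i) = q := by
        intro i
        by_cases h : f i = p ∨ f i = q
        · simp only [hc, if_pos h]; exact h
        · simp only [hc, if_neg h]
          rcases hcov i with h' | h' | h' | h'
          · exact absurd (Or.inl h') h
          · exact absurd (Or.inr h') h
          · exact Or.inl h'
          · exact Or.inr h'
      have hc_or : ∀ i, c i = i ∨ c i = succ i := by
        intro i
        by_cases h : f i = p ∨ f i = q
        · exact Or.inl (by simp only [hc, if_pos h])
        · exact Or.inr (by simp only [hc, if_neg h])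
      set φ : Fin m → Bool × Bool := fun i => (decide (f (c i) = p), decide (c i = i)) with hφdef
      have hφ : Function.Injective φ := by
        intro a b hab
        have e1 : (f (c a) = p) ↔ (f (c b) = p) :=
          decide_eq_decide.mp (congrArg Prod.fst hab)
        have e2 : (c a = a) ↔ (c b = b) :=
          decide_eq_decide.mp (congrArg Prod.snd hab)
        have hceq : c a = c b := by
          rcases hfc a with ha' | ha' <;> rcases hfc b with hb' | hb'
          · exact hfinj (ha'.trans hb'.symm)
          · exact absurd ((e1.mp ha').symm.trans hb') hpq
          · exact absurd ((e1.mpr hb').symm.trans ha') hpq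
          · exact hfinj (ha'.trans hb'.symm)
        by_cases h : c a = a
        · have hb' : c b = b := e2.mp h
          rw [h, hb'] at hceq; exact hceq
        · have ha2 : c a = succ a := (hc_or a).resolve_left h
          have hb2 : c b = succ b := (hc_or b).resolve_left (fun hh => h (e2.mpr hh))
          rw [ha2, hb2] at hceq
          exact hsuccinj hceq
      have hcard := Fintype.card_le_of_injective φ hφ
      simp only [Fintype.card_fin, Fintype.card_prod, Fintype.card_bool] at hcard
      omega
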